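/- Assume x̄ ≠ 0 and ε̃ ≥ 0. If x ∈ ℝⁿ satisfies ⟨x̄,x⟩ = 0 and ‖x‖² = (‖x̄‖² + ε̃)/3, then ∇g(x) = 0 and x is a strict saddle point of g: x is neither a local minimizer nor a local maximizer of g. In fact the second derivative of t ↦ g(x + t·x̄) at t = 0 equals −2‖x̄‖⁴ < 0, while the second derivative of t ↦ g(x + t·x) at t = 0 equals 6‖x‖⁴ > 0. -/

import Mathlib

open scoped RealInnerProductSpace BigOperators

/-- The expectation `g` of the noisy phase-retrieval objective (up to an additive constant). -/
noncomputable def gObj (n : ℕ) (xbar : EuclideanSpace ℝ (Fin n)) (εt : ℝ)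
    (x : EuclideanSpace ℝ (Fin n)) : ℝ :=
  (3 / 4) * (‖x‖ ^ 4 + ‖xbar‖ ^ 4) - (1 / 2) * ‖xbar‖ ^ 2 * ‖x‖ ^ 2 - ⟪xbar, x⟫ ^ 2
    - (εt / 2) * (‖x‖ ^ 2 - ‖xbar‖ ^ 2)

/-- The gradient of `g`. -/
noncomputable def gGrad (n : ℕ) (xbar : EuclideanSpace ℝ (Fin n)) (εt : ℝ)
    (x : EuclideanSpace ℝ (Fin n)) : EuclideanSpace ℝ (Fin n) :=
  (3 * ‖x‖ ^ 2) • x - (2 * ⟪xbar, x⟫) • xbar - (‖xbar‖ ^ 2 + εt) • x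

/-! At such a point the gradient vanishes, and along the two lines through `x` in the directions
`x̄` and `x` the objective is `g(x) - ‖x̄‖⁴ t² (1 - 3t²/4)` and `g(x) + (3/4)‖x‖⁴ t² (t + 2)²`
respectively: it strictly decreases along the first and strictly increases along the second
near `t = 0`, so `x` is neither a local minimizer nor a local maximizer. -/

open Topology

section SecondOrder

variable {f r : ℝ → ℝ} {a : ℝ}

theorem not_isLocalMin_of_eq_add_sq_mul (hf : ∀ t, f t = a + t ^ 2 * r t)
    (hr : ContinuousAt r 0) (hr0 : r 0 < 0) : ¬IsLocalMin f 0 := by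
  intro hmin
  have hlt : ∀ᶠ t in 𝓝[≠] 0, f t < f 0 := by
    filter_upwards [nhdsWithin_le_nhds (hr.eventually_lt_const hr0), self_mem_nhdsWithin]
      with t hrt ht
    rw [hf, hf 0]
    nlinarith [mul_neg_of_pos_of_neg (sq_pos_of_ne_zero ht) hrt]
  obtain ⟨t, hle, hlt⟩ := ((hmin.filter_mono nhdsWithin_le_nhds).and hlt).exists
  exact hle.not_gt hlt

theorem not_isLocalMax_of_eq_add_sq_mul (hf : ∀ t, f t = a + t ^ 2 * r t)
    (hr : ContinuousAt r 0) (hr0 : 0 < r 0) : ¬IsLocalMax f 0 := fun hmax =>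
  not_isLocalMin_of_eq_add_sq_mul (a := -a) (r := fun t => -r t) (fun t => by rw [hf]; ring)
    hr.neg (neg_neg_of_pos hr0) hmax.neg

theorem deriv_deriv_eq_of_eq_add_sq_mul (hf : ∀ t, f t = a + t ^ 2 * r t)
    (hr : ContDiff ℝ 2 r) : deriv (deriv f) 0 = 2 * r 0 := by
  have hr1 : Differentiable ℝ r := hr.differentiable (by norm_num)
  have hr2 : Differentiable ℝ (deriv r) := (hr.deriv' (n := 1)).differentiable (by norm_num)
  have hf' : deriv f = fun t => 2 * t * r t + t ^ 2 * deriv r t := by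
    funext t
    rw [show f = fun t => a + t ^ 2 * r t from funext hf]
    exact (((hasDerivAt_pow 2 t).mul (hr1 t).hasDerivAt).const_add a).deriv.trans (by ring)
  rw [hf']
  have h := (((hasDerivAt_id' 0).const_mul 2).mul (hr1 0).hasDerivAt).add
    ((hasDerivAt_pow 2 (0 : ℝ)).mul (hr2 0).hasDerivAt)
  exact h.deriv.trans (by ring)

end SecondOrder

section Line

variable {E : Type*} [NormedAddCommGroup E] [NormedSpace ℝ E] {f : E → ℝ} {x : E}

theorem IsLocalMin.comp_add_smul (h : IsLocalMin f x) (v : E) :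
    IsLocalMin (fun t : ℝ => f (x + t • v)) 0 :=
  IsLocalMin.comp_continuous (g := fun t : ℝ => x + t • v) (by simpa using h) (by fun_prop)

theorem IsLocalMax.comp_add_smul (h : IsLocalMax f x) (v : E) :
    IsLocalMax (fun t : ℝ => f (x + t • v)) 0 :=
  IsLocalMax.comp_continuous (g := fun t : ℝ => x + t • v) (by simpa using h) (by fun_prop)

end Line

section PhaseRetrieval

variable {n : ℕ} {xbar x : EuclideanSpace ℝ (Fin n)} {εt : ℝ}

theorem gGrad_eq_zero (horth : ⟪xbar, x⟫ = 0) (hsph : ‖x‖ ^ 2 = (‖xbar‖ ^ 2 + εt) / 3) :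
    gGrad n xbar εt x = 0 := by
  rw [gGrad, horth, hsph, mul_div_cancel₀ _ three_ne_zero]
  simp

theorem gObj_add_smul_xbar (horth : ⟪xbar, x⟫ = 0) (hsph : ‖x‖ ^ 2 = (‖xbar‖ ^ 2 + εt) / 3)
    (t : ℝ) :
    gObj n xbar εt (x + t • xbar) =
      gObj n xbar εt x + t ^ 2 * (‖xbar‖ ^ 4 * (3 / 4 * t ^ 2 - 1)) := by
  have hnorm : ‖x + t • xbar‖ ^ 2 = ‖x‖ ^ 2 + t ^ 2 * ‖xbar‖ ^ 2 := by
    rw [norm_add_sq_real, norm_smul, real_inner_smul_right, real_inner_comm, horth,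
      Real.norm_eq_abs, mul_pow, sq_abs]
    ring
  have hnorm4 : ‖x + t • xbar‖ ^ 4 = (‖x‖ ^ 2 + t ^ 2 * ‖xbar‖ ^ 2) ^ 2 := by
    rw [← hnorm]; ring
  have hinner : ⟪xbar, x + t • xbar⟫ = t * ‖xbar‖ ^ 2 := by
    rw [inner_add_right, real_inner_smul_right, horth, real_inner_self_eq_norm_sq, zero_add]
  simp only [gObj, hinner, horth, hnorm, hnorm4]
  linear_combination (3 / 2 * t ^ 2 * ‖xbar‖ ^ 2) * hsph

theorem gObj_add_smul_self (horth : ⟪xbar, x⟫ = 0) (hsph : ‖x‖ ^ 2 = (‖xbar‖ ^ 2 + εt) / 3)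
    (t : ℝ) :
    gObj n xbar εt (x + t • x) = gObj n xbar εt x + t ^ 2 * (3 / 4 * ‖x‖ ^ 4 * (t + 2) ^ 2) := by
  have hx : x + t • x = (1 + t) • x := by module
  have hnorm : ‖x + t • x‖ ^ 2 = (1 + t) ^ 2 * ‖x‖ ^ 2 := by
    rw [hx, norm_smul, Real.norm_eq_abs, mul_pow, sq_abs]
  have hnorm4 : ‖x + t • x‖ ^ 4 = ((1 + t) ^ 2 * ‖x‖ ^ 2) ^ 2 := by
    rw [← hnorm]; ring
  have hinner : ⟪xbar, x + t • x⟫ = 0 := by rw [hx, real_inner_smul_right, horth, mul_zero]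
  simp only [gObj, hinner, horth, hnorm, hnorm4]
  linear_combination (3 / 2 * ‖x‖ ^ 2 * ((1 + t) ^ 2 - 1)) * hsph

end PhaseRetrieval

/-- points orthogonal to `x̄` on the sphere of radius
`√((‖x̄‖² + ε̃)/3)` are strict saddle points of `g`. -/
theorem stmt10 (n : ℕ) (xbar : EuclideanSpace ℝ (Fin n)) (hxbar : xbar ≠ 0)
    (εt : ℝ) (hεt : 0 ≤ εt) (x : EuclideanSpace ℝ (Fin n))
    (horth : ⟪xbar, x⟫ = 0) (hsph : ‖x‖ ^ 2 = (‖xbar‖ ^ 2 + εt) / 3) :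
    gGrad n xbar εt x = 0 ∧
    ¬ IsLocalMin (gObj n xbar εt) x ∧
    ¬ IsLocalMax (gObj n xbar εt) x ∧
    deriv (deriv fun t : ℝ => gObj n xbar εt (x + t • xbar)) 0 = -2 * ‖xbar‖ ^ 4 ∧
    -2 * ‖xbar‖ ^ 4 < 0 ∧
    deriv (deriv fun t : ℝ => gObj n xbar εt (x + t • x)) 0 = 6 * ‖x‖ ^ 4 ∧
    0 < 6 * ‖x‖ ^ 4 := by
  have hxbar_pos : 0 < ‖xbar‖ := norm_pos_iff.mpr hxbar
  have hx_pos : 0 < ‖x‖ := by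
    refine norm_pos_iff.mpr fun hx => ?_
    rw [hx, norm_zero] at hsph
    nlinarith [pow_pos hxbar_pos 2]
  have hdescent := gObj_add_smul_xbar horth hsph
  have hascent := gObj_add_smul_self horth hsph
  refine ⟨gGrad_eq_zero horth hsph, fun hmin => ?_, fun hmax => ?_, ?_,
    by nlinarith [pow_pos hxbar_pos 4], ?_, by positivity⟩
  · exact not_isLocalMin_of_eq_add_sq_mul hdescent (by fun_prop)
      (by nlinarith [pow_pos hxbar_pos 4]) (hmin.comp_add_smul xbar)
  · exact not_isLocalMax_of_eq_add_sq_mul hascent (by fun_prop) (by positivity)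
      (hmax.comp_add_smul x)
  · rw [deriv_deriv_eq_of_eq_add_sq_mul hdescent (by fun_prop)]
    ring
  · rw [deriv_deriv_eq_of_eq_add_sq_mul hascent (by fun_prop)]
    ring
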